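/- Let (A; G, H) be a partial dynamic De Morgan algebra such that (a) x ∈ dom G implies G(x)' ∈ dom H, and (b) x ∈ dom H implies H(x)' ∈ dom G. Then for every nonempty proper down-set D of A: (1) for every b ∈ dom G, κ_D(G(b)) = ⨅{ κ_E(b) : E a nonempty proper down-set with D R_G E }; and (2) for every b ∈ dom H, κ_D(H(b)) = ⨅{ κ_E(b) : E a nonempty proper down-set with E R_G D }, both infima taken in M₂ (viewed as a complete lattice). -/

import Mathlib

/-!
Read `κ_E(a) ≤ κ_F(c)` as the pair of implications `c ∈ F → a ∈ E` and `a' ∈ E → c' ∈ F`.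
Then `κ_D(G b)` is a lower bound by the definition of `R_G`, and `κ_D(H b)` is one by (P3)
applied at `(H b)'`. For the converse it suffices, coordinatewise, to find one related proper
down-set containing `b` when `G b ∈ D` (resp. `H b ∈ D`), and one omitting `b'` when
`(G b)' ∉ D` (resp. `(H b)' ∉ D`). The least related down-sets containing `{b}` or `∅` do this:
the down-closures of `{b} ∪ {x' : (G x)' ∈ D}` and of `{b} ∪ G(dom G ∩ D)`. They are related by
(P2), (P4) and (P3), and proper by (P1).
-/

/-- A down-set of a poset. -/
def IsDownSet {A : Type*} [PartialOrder A] (D : Set A) : Prop :=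
  ∀ ⦃x y : A⦄, x ≤ y → y ∈ D → x ∈ D

/-- A nonempty proper down-set of a poset. -/
def IsProperDownSet {A : Type*} [PartialOrder A] (D : Set A) : Prop :=
  D.Nonempty ∧ D ≠ Set.univ ∧ IsDownSet D

open Classical in
/-- `hD D a = false` iff `a ∈ D`. -/
noncomputable def hD {A : Type*} (D : Set A) (a : A) : Bool :=
  if a ∈ D then false else true

/-- `κ_D(a) = (h_D(a), h_D^∂(a))` where `h_D^∂(a) = ¬ h_D(a')`. -/
noncomputable def kappa {A : Type*} (neg : A → A) (D : Set A) (a : A) :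
    Bool × Bool := (hD D a, ! hD D (neg a))

/-- The negation of the four-element De Morgan poset `M₂`: `(a,b)' = (¬b, ¬a)`. -/
def negM2 (m : Bool × Bool) : Bool × Bool := (! m.2, ! m.1)

/-- The relation `R_G` on down-sets: `D R_G E` iff `κ_D(G x) ≤ κ_E(x)` for all `x ∈ dom G`. -/
def RG {A : Type*} (neg : A → A) (domG : Set A) (G : A → A) (D E : Set A) : Prop :=
  ∀ x ∈ domG, kappa neg D (G x) ≤ kappa neg E x

namespace DeMorganPoset

variable {A : Type*} [PartialOrder A] {neg : A → A}

theorem neg_le_neg_iff (hanti : ∀ a b : A, a ≤ b → neg b ≤ neg a)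
    (hinv : ∀ a : A, neg (neg a) = a) {a b : A} : neg a ≤ neg b ↔ b ≤ a :=
  ⟨fun h => by simpa only [hinv] using hanti _ _ h, hanti b a⟩

theorem neg_le_comm (hanti : ∀ a b : A, a ≤ b → neg b ≤ neg a)
    (hinv : ∀ a : A, neg (neg a) = a) {a b : A} : neg a ≤ b ↔ neg b ≤ a := by
  rw [← neg_le_neg_iff hanti hinv, hinv]

theorem neg_top [BoundedOrder A] (hanti : ∀ a b : A, a ≤ b → neg b ≤ neg a)
    (hinv : ∀ a : A, neg (neg a) = a) : neg ⊤ = ⊥ :=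
  le_bot_iff.1 ((neg_le_comm hanti hinv).2 le_top)

theorem neg_bot [BoundedOrder A] (hanti : ∀ a b : A, a ≤ b → neg b ≤ neg a)
    (hinv : ∀ a : A, neg (neg a) = a) : neg ⊥ = ⊤ := by
  rw [← neg_top hanti hinv, hinv]

end DeMorganPoset

open DeMorganPoset

section DownSets

variable {A : Type*} [PartialOrder A]

theorem IsProperDownSet.isDownSet {D : Set A} (hD : IsProperDownSet D) : IsDownSet D :=
  hD.2.2

theorem IsProperDownSet.bot_mem [OrderBot A] {D : Set A} (hD : IsProperDownSet D) : ⊥ ∈ D :=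
  let ⟨_, hd⟩ := hD.1
  hD.isDownSet bot_le hd

theorem IsProperDownSet.top_notMem [OrderTop A] {D : Set A} (hD : IsProperDownSet D) : ⊤ ∉ D :=
  fun h => hD.2.1 (Set.eq_univ_of_forall fun _ => hD.isDownSet le_top h)

theorem isProperDownSet_lowerClosure [OrderTop A] {S : Set A} (hne : S.Nonempty)
    (htop : ⊤ ∉ S) : IsProperDownSet (lowerClosure S : Set A) := by
  refine ⟨hne.mono subset_lowerClosure, fun h => ?_,
    fun _ _ hxy hy => (lowerClosure S).lower hxy hy⟩
  obtain ⟨s, hs, hts⟩ := mem_lowerClosure.1 (h ▸ Set.mem_univ (⊤ : A))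
  exact htop (top_le_iff.1 hts ▸ hs)

end DownSets

section Kappa

variable {A : Type*} (neg : A → A)

theorem kappa_le_kappa_iff (X Y : Set A) (a b : A) :
    kappa neg X a ≤ kappa neg Y b ↔ (b ∈ Y → a ∈ X) ∧ (neg a ∈ X → neg b ∈ Y) := by
  simp only [kappa, hD, Prod.mk_le_mk]
  split_ifs <;> simp_all

theorem kappa_eq_sInf_of_witnesses [PartialOrder A] {X : Set A} {a b : A} {R : Set A → Prop}
    (hlow : ∀ E, IsProperDownSet E → R E → kappa neg X a ≤ kappa neg E b)
    (hmem : a ∈ X → ∃ E, IsProperDownSet E ∧ R E ∧ b ∈ E)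
    (hnot : neg a ∉ X → ∃ E, IsProperDownSet E ∧ R E ∧ neg b ∉ E) :
    kappa neg X a = sInf {m | ∃ E, IsProperDownSet E ∧ R E ∧ m = kappa neg E b} := by
  have sInf_le_kappa : ∀ E, IsProperDownSet E → R E →
      sInf {m | ∃ E, IsProperDownSet E ∧ R E ∧ m = kappa neg E b} ≤ kappa neg E b :=
    fun E hE hRE => sInf_le ⟨E, hE, hRE, rfl⟩
  refine le_antisymm (le_sInf ?_) (Prod.le_def.2 ⟨?_, ?_⟩)
  · rintro _ ⟨E, hE, hRE, rfl⟩
    exact hlow E hE hRE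
  · by_cases ha : a ∈ X
    · obtain ⟨E, hE, hRE, hbE⟩ := hmem ha
      refine (Prod.le_def.1 (sInf_le_kappa E hE hRE)).1.trans ?_
      simp [kappa, hD, ha, hbE]
    · simp [kappa, hD, ha]
  · by_cases ha : neg a ∈ X
    · simp [kappa, hD, ha]
    · obtain ⟨E, hE, hRE, hbE⟩ := hnot ha
      refine (Prod.le_def.1 (sInf_le_kappa E hE hRE)).2.trans ?_
      simp [kappa, hD, ha, hbE]

theorem RG_iff (domG : Set A) (G : A → A) (D E : Set A) :
    RG neg domG G D E ↔ ∀ x ∈ domG, (x ∈ E → G x ∈ D) ∧ (neg (G x) ∈ D → neg x ∈ E) :=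
  forall₂_congr fun x _ => kappa_le_kappa_iff neg D E (G x) x

end Kappa

section Witnesses

variable {A : Type*} [PartialOrder A] {neg : A → A} {domG domH : Set A} {G H : A → A}

theorem neg_le_map_neg_map (hinv : ∀ a : A, neg (neg a) = a)
    (hP3 : ∀ x : A, neg x ∈ domG → neg (G (neg x)) ∈ domH → x ≤ H (neg (G (neg x))))
    (hdom : ∀ x ∈ domG, neg (G x) ∈ domH) : ∀ x ∈ domG, neg x ≤ H (neg (G x)) := by
  intro x hx
  simpa only [hinv] using hP3 (neg x) (by rwa [hinv]) (by rw [hinv]; exact hdom x hx)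

/-- The least down-set `E ⊇ C` with `D R_G E`, for `C ⊆ dom G` with `G '' C ⊆ D`. -/
def rgSucc (neg : A → A) (domG : Set A) (G : A → A) (D C : Set A) : Set A :=
  lowerClosure (C ∪ neg '' {x ∈ domG | neg (G x) ∈ D})

/-- The least down-set `E ⊇ C` with `E R_G D`, for `C ⊆ dom H` with `H '' C ⊆ D`. -/
def rgPred (domG : Set A) (G : A → A) (D C : Set A) : Set A :=
  lowerClosure (C ∪ G '' (domG ∩ D))

theorem RG_rgSucc (hinv : ∀ a : A, neg (neg a) = a)
    (hP2G : ∀ x ∈ domG, ∀ y ∈ domG, x ≤ y → G x ≤ G y)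
    (hP4G : ∀ x y : A, x ≤ y → x ∈ domG → neg y ∈ domG → G x ≤ neg (G (neg y)))
    {D C : Set A} (hD : IsDownSet D) (hC : ∀ c ∈ C, c ∈ domG ∧ G c ∈ D) :
    RG neg domG G D (rgSucc neg domG G D C) := by
  refine (RG_iff neg domG G D _).2 fun x hx =>
    ⟨?_, fun hGx => subset_lowerClosure (Or.inr ⟨x, ⟨hx, hGx⟩, rfl⟩)⟩
  rintro ⟨y, hyC | ⟨z, ⟨hz, hGz⟩, rfl⟩, hxy⟩
  · exact hD (hP2G x hx y (hC y hyC).1 hxy) (hC y hyC).2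
  · have hGxz := hP4G x (neg z) hxy hx (by rwa [hinv])
    rw [hinv] at hGxz
    exact hD hGxz hGz

theorem isProperDownSet_rgSucc [BoundedOrder A] (hanti : ∀ a b : A, a ≤ b → neg b ≤ neg a)
    (hinv : ∀ a : A, neg (neg a) = a) (htopG : (⊤ : A) ∈ domG) (hG0 : G ⊥ = ⊥) (hG1 : G ⊤ = ⊤)
    {D C : Set A} (hD : IsProperDownSet D) (hC : ∀ c ∈ C, G c ∈ D) :
    IsProperDownSet (rgSucc neg domG G D C) := by
  refine isProperDownSet_lowerClosure
    ⟨neg ⊤, Or.inr ⟨⊤, ⟨htopG, by rw [hG1, neg_top hanti hinv]; exact hD.bot_mem⟩, rfl⟩⟩ ?_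
  rintro (htC | ⟨x, ⟨-, hGx⟩, hx⟩)
  · exact hD.top_notMem (hG1 ▸ hC ⊤ htC)
  · rw [← hinv x, hx, neg_top hanti hinv, hG0, neg_bot hanti hinv] at hGx
    exact hD.top_notMem hGx

theorem neg_notMem_rgSucc_empty (hanti : ∀ a b : A, a ≤ b → neg b ≤ neg a)
    (hinv : ∀ a : A, neg (neg a) = a) (hP2G : ∀ x ∈ domG, ∀ y ∈ domG, x ≤ y → G x ≤ G y)
    {D : Set A} (hD : IsDownSet D) {b : A} (hb : b ∈ domG) (hGb : neg (G b) ∉ D) :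
    neg b ∉ rgSucc neg domG G D ∅ := by
  rw [rgSucc, Set.empty_union]
  rintro ⟨_, ⟨x, ⟨hx, hGx⟩, rfl⟩, hbx⟩
  rw [neg_le_neg_iff hanti hinv] at hbx
  exact hGb (hD (hanti _ _ (hP2G x hx b hb hbx)) hGx)

theorem RG_rgPred (hanti : ∀ a b : A, a ≤ b → neg b ≤ neg a) (hinv : ∀ a : A, neg (neg a) = a)
    (hP2H : ∀ x ∈ domH, ∀ y ∈ domH, x ≤ y → H x ≤ H y)
    (hP4H : ∀ x y : A, x ≤ y → x ∈ domH → neg y ∈ domH → H x ≤ neg (H (neg y)))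
    (ha : ∀ x ∈ domG, neg (G x) ∈ domH) (hHG : ∀ x ∈ domG, neg x ≤ H (neg (G x)))
    {D C : Set A} (hD : IsDownSet D) (hC : ∀ c ∈ C, c ∈ domH ∧ H c ∈ D) :
    RG neg domG G (rgPred domG G D C) D := by
  refine (RG_iff neg domG G _ D).2 fun x hx =>
    ⟨fun hxD => subset_lowerClosure (Or.inr ⟨x, ⟨hx, hxD⟩, rfl⟩), ?_⟩
  rintro ⟨y, hyC | ⟨z, ⟨hz, hzD⟩, rfl⟩, hxy⟩
  · exact hD ((hHG x hx).trans (hP2H _ (ha x hx) y (hC y hyC).1 hxy)) (hC y hyC).2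
  · refine hD ((hHG x hx).trans ((hP4H _ _ hxy (ha x hx) (ha z hz)).trans ?_)) hzD
    exact (neg_le_comm hanti hinv).1 (hHG z hz)

theorem isProperDownSet_rgPred [BoundedOrder A] (hanti : ∀ a b : A, a ≤ b → neg b ≤ neg a)
    (hinv : ∀ a : A, neg (neg a) = a) (hbotG : (⊥ : A) ∈ domG) (hH0 : H ⊥ = ⊥) (hH1 : H ⊤ = ⊤)
    (hHG : ∀ x ∈ domG, neg x ≤ H (neg (G x)))
    {D C : Set A} (hD : IsProperDownSet D) (hC : ∀ c ∈ C, H c ∈ D) :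
    IsProperDownSet (rgPred domG G D C) := by
  refine isProperDownSet_lowerClosure ⟨G ⊥, Or.inr ⟨⊥, ⟨hbotG, hD.bot_mem⟩, rfl⟩⟩ ?_
  rintro (htC | ⟨x, ⟨hx, hxD⟩, hGx⟩)
  · exact hD.top_notMem (hH1 ▸ hC ⊤ htC)
  · have hnx := hHG x hx
    rw [hGx, neg_top hanti hinv, hH0, le_bot_iff] at hnx
    rw [← hinv x, hnx, neg_bot hanti hinv] at hxD
    exact hD.top_notMem hxD

theorem neg_notMem_rgPred_empty (hanti : ∀ a b : A, a ≤ b → neg b ≤ neg a)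
    (hinv : ∀ a : A, neg (neg a) = a) (hP2H : ∀ x ∈ domH, ∀ y ∈ domH, x ≤ y → H x ≤ H y)
    (ha : ∀ x ∈ domG, neg (G x) ∈ domH) (hHG : ∀ x ∈ domG, neg x ≤ H (neg (G x)))
    {D : Set A} (hD : IsDownSet D) {b : A} (hb : b ∈ domH) (hHb : neg (H b) ∉ D) :
    neg b ∉ rgPred domG G D ∅ := by
  rw [rgPred, Set.empty_union]
  rintro ⟨_, ⟨x, ⟨hx, hxD⟩, rfl⟩, hbx⟩
  have hHGx := hP2H _ (ha x hx) b hb ((neg_le_comm hanti hinv).1 hbx)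
  refine hHb (hD ?_ hxD)
  exact (hanti _ _ hHGx).trans ((neg_le_comm hanti hinv).1 (hHG x hx))

theorem kappa_map_le_of_RG (hanti : ∀ a b : A, a ≤ b → neg b ≤ neg a)
    (hinv : ∀ a : A, neg (neg a) = a) (hb : ∀ x ∈ domH, neg (H x) ∈ domG)
    (hGH : ∀ x ∈ domH, neg x ≤ G (neg (H x))) {D E : Set A} (hE : IsDownSet E)
    (hED : RG neg domG G E D) {b : A} (hbH : b ∈ domH) :
    kappa neg D (H b) ≤ kappa neg E b := by
  obtain ⟨hHbE, hHbD⟩ := (RG_iff neg domG G E D).1 hED _ (hb b hbH)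
  rw [hinv] at hHbD
  refine (kappa_le_kappa_iff neg D E (H b) b).2
    ⟨fun hbE => hHbD (hE ?_ hbE), fun hHb => hE (hGH b hbH) (hHbE hHb)⟩
  exact (neg_le_comm hanti hinv).1 (hGH b hbH)

end Witnesses

theorem stmt_14_general {A : Type*} [PartialOrder A] [BoundedOrder A]
    (neg : A → A)
    (hanti : ∀ a b : A, a ≤ b → neg b ≤ neg a)
    (hinv : ∀ a : A, neg (neg a) = a)
    (domG : Set A) (G : A → A) (domH : Set A) (H : A → A)
    -- (P1)
    (hbotG : (⊥ : A) ∈ domG) (htopG : (⊤ : A) ∈ domG)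
    (hG0 : G ⊥ = ⊥) (hG1 : G ⊤ = ⊤) (hH0 : H ⊥ = ⊥) (hH1 : H ⊤ = ⊤)
    -- (P2)
    (hP2G : ∀ x ∈ domG, ∀ y ∈ domG, x ≤ y → G x ≤ G y)
    (hP2H : ∀ x ∈ domH, ∀ y ∈ domH, x ≤ y → H x ≤ H y)
    -- (P3)
    (hP3G : ∀ x : A, neg x ∈ domH → neg (H (neg x)) ∈ domG →
      x ≤ G (neg (H (neg x))))
    (hP3H : ∀ x : A, neg x ∈ domG → neg (G (neg x)) ∈ domH →
      x ≤ H (neg (G (neg x))))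
    -- (P4)
    (hP4G : ∀ x y : A, x ≤ y → x ∈ domG → neg y ∈ domG → G x ≤ neg (G (neg y)))
    (hP4H : ∀ x y : A, x ≤ y → x ∈ domH → neg y ∈ domH → H x ≤ neg (H (neg y)))
    -- domain conditions (a) and (b)
    (ha : ∀ x ∈ domG, neg (G x) ∈ domH)
    (hb : ∀ x ∈ domH, neg (H x) ∈ domG) :
    ∀ D : Set A, IsProperDownSet D →
      (∀ b ∈ domG,
        kappa neg D (G b) =
          sInf {m : Bool × Bool |
            ∃ E : Set A, IsProperDownSet E ∧ RG neg domG G D E ∧ m = kappa neg E b}) ∧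
      (∀ b ∈ domH,
        kappa neg D (H b) =
          sInf {m : Bool × Bool |
            ∃ E : Set A, IsProperDownSet E ∧ RG neg domG G E D ∧ m = kappa neg E b}) := by
  have hHG := neg_le_map_neg_map hinv hP3H ha
  have hGH := neg_le_map_neg_map hinv hP3G hb
  intro D hD
  refine ⟨fun b hbG => kappa_eq_sInf_of_witnesses neg (fun E _ hDE => hDE b hbG) ?_ ?_,
    fun b hbH => kappa_eq_sInf_of_witnesses neg
      (fun E hE hED => kappa_map_le_of_RG hanti hinv hb hGH hE.isDownSet hED hbH) ?_ ?_⟩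
  · intro hGb
    refine ⟨rgSucc neg domG G D {b}, isProperDownSet_rgSucc hanti hinv htopG hG0 hG1 hD ?_,
      RG_rgSucc hinv hP2G hP4G hD.isDownSet ?_, subset_lowerClosure (Or.inl rfl)⟩
    · simpa using hGb
    · simpa using ⟨hbG, hGb⟩
  · intro hGb
    exact ⟨rgSucc neg domG G D ∅, isProperDownSet_rgSucc hanti hinv htopG hG0 hG1 hD (by simp),
      RG_rgSucc hinv hP2G hP4G hD.isDownSet (by simp),
      neg_notMem_rgSucc_empty hanti hinv hP2G hD.isDownSet hbG hGb⟩
  · intro hHb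
    refine ⟨rgPred domG G D {b}, isProperDownSet_rgPred hanti hinv hbotG hH0 hH1 hHG hD ?_,
      RG_rgPred hanti hinv hP2H hP4H ha hHG hD.isDownSet ?_, subset_lowerClosure (Or.inl rfl)⟩
    · simpa using hHb
    · simpa using ⟨hbH, hHb⟩
  · intro hHb
    exact ⟨rgPred domG G D ∅, isProperDownSet_rgPred hanti hinv hbotG hH0 hH1 hHG hD (by simp),
      RG_rgPred hanti hinv hP2H hP4H ha hHG hD.isDownSet (by simp),
      neg_notMem_rgPred_empty hanti hinv hP2H ha hHG hD.isDownSet hbH hHb⟩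

/-- For a partial dynamic De Morgan algebra `(A; G, H)` satisfying the domain
conditions (a) and (b): for every nonempty proper down-set `D`,
`κ_D(G(b)) = ⨅ {κ_E(b) : D R_G E}` for `b ∈ dom G`, and
`κ_D(H(b)) = ⨅ {κ_E(b) : E R_G D}` for `b ∈ dom H`. -/
theorem stmt_14 {A : Type*} [PartialOrder A] [BoundedOrder A]
    (neg : A → A)
    (hanti : ∀ a b : A, a ≤ b → neg b ≤ neg a)
    (hinv : ∀ a : A, neg (neg a) = a)
    (domG : Set A) (G : A → A) (domH : Set A) (H : A → A)
    -- (P1)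
    (hbotG : (⊥ : A) ∈ domG) (htopG : (⊤ : A) ∈ domG)
    (hbotH : (⊥ : A) ∈ domH) (htopH : (⊤ : A) ∈ domH)
    (hG0 : G ⊥ = ⊥) (hG1 : G ⊤ = ⊤) (hH0 : H ⊥ = ⊥) (hH1 : H ⊤ = ⊤)
    -- (P2)
    (hP2G : ∀ x ∈ domG, ∀ y ∈ domG, x ≤ y → G x ≤ G y)
    (hP2H : ∀ x ∈ domH, ∀ y ∈ domH, x ≤ y → H x ≤ H y)
    -- (P3)
    (hP3G : ∀ x : A, neg x ∈ domH → neg (H (neg x)) ∈ domG →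
      x ≤ G (neg (H (neg x))))
    (hP3H : ∀ x : A, neg x ∈ domG → neg (G (neg x)) ∈ domH →
      x ≤ H (neg (G (neg x))))
    -- (P4)
    (hP4G : ∀ x y : A, x ≤ y → x ∈ domG → neg y ∈ domG → G x ≤ neg (G (neg y)))
    (hP4H : ∀ x y : A, x ≤ y → x ∈ domH → neg y ∈ domH → H x ≤ neg (H (neg y)))
    -- domain conditions (a) and (b)
    (ha : ∀ x ∈ domG, neg (G x) ∈ domH)
    (hb : ∀ x ∈ domH, neg (H x) ∈ domG) :
    ∀ D : Set A, IsProperDownSet D →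
      (∀ b ∈ domG,
        kappa neg D (G b) =
          sInf {m : Bool × Bool |
            ∃ E : Set A, IsProperDownSet E ∧ RG neg domG G D E ∧ m = kappa neg E b}) ∧
      (∀ b ∈ domH,
        kappa neg D (H b) =
          sInf {m : Bool × Bool |
            ∃ E : Set A, IsProperDownSet E ∧ RG neg domG G E D ∧ m = kappa neg E b}) :=
  stmt_14_general neg hanti hinv domG G domH H hbotG htopG hG0 hG1 hH0 hH1 hP2G hP2H hP3G hP3H hP4G
    hP4H ha hb
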